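/- Alice's cheating strategy succeeds with total probability 3/4: letting S ⊗ 1 be the map on ℂ³ ⊗ ℂ³ induced by the swap S of basis vectors e₀ and e₁ of the first factor (fixing e₂), one has (1/2)·|⟨ψ₀, ψ̃₀⟩|² + (1/2)·|⟨ψ₁, (S ⊗ 1) ψ̃₀⟩|² = 3/4. -/

import Mathlib

/-!
Expanding in the orthonormal basis `e_{(i,j)}`, `ψ̃₀` shares `e_{(0,0)}` and `e_{(1,2)}` with `ψ₀`
(coefficients `1` and `2`), and `(S ⊗ 1) ψ̃₀` shares `e_{(1,1)}` and `e_{(0,2)}` with `ψ₁` with the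
same coefficients. Both overlaps are therefore `3 / (√2 · √6)`, of squared modulus `9/12 = 3/4`.
-/

noncomputable section

/-- The standard orthonormal basis vector `e_{(i,j)}` of `ℂ³ ⊗ ℂ³`,
modelled as `EuclideanSpace ℂ (Fin 3 × Fin 3)`. -/
def e (p : Fin 3 × Fin 3) : EuclideanSpace ℂ (Fin 3 × Fin 3) :=
  EuclideanSpace.single p 1

/-- The honest state `ψ₀ = (1/√2)(e_{(0,0)} + e_{(1,2)})`. -/
def ψ₀ : EuclideanSpace ℂ (Fin 3 × Fin 3) :=
  (1 / (Real.sqrt 2 : ℂ)) • (e (0, 0) + e (1, 2))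

/-- The honest state `ψ₁ = (1/√2)(e_{(1,1)} + e_{(0,2)})`. -/
def ψ₁ : EuclideanSpace ℂ (Fin 3 × Fin 3) :=
  (1 / (Real.sqrt 2 : ℂ)) • (e (1, 1) + e (0, 2))

/-- Alice's cheating state `ψ̃₀ = (1/√6)(e_{(0,0)} + e_{(0,1)} + 2 e_{(1,2)})`. -/
def ψt₀ : EuclideanSpace ℂ (Fin 3 × Fin 3) :=
  (1 / (Real.sqrt 6 : ℂ)) • (e (0, 0) + e (0, 1) + (2 : ℂ) • e (1, 2))

/-- The swap of the indices `0` and `1` of `Fin 3` (fixing `2`). -/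
def s : Fin 3 → Fin 3 := Equiv.swap (0 : Fin 3) 1

/-- The map `S ⊗ 1` on `ℂ³ ⊗ ℂ³` induced by the swap `S` of `e₀` and `e₁` in the first
factor (fixing `e₂`): `(S ⊗ 1) e_{(0,j)} = e_{(1,j)}`, `(S ⊗ 1) e_{(1,j)} = e_{(0,j)}`,
`(S ⊗ 1) e_{(2,j)} = e_{(2,j)}`. -/
def S1 : EuclideanSpace ℂ (Fin 3 × Fin 3) →ₗ[ℂ] EuclideanSpace ℂ (Fin 3 × Fin 3) where
  toFun v := WithLp.toLp 2 (fun p => v (s p.1, p.2))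
  map_add' v w := rfl
  map_smul' c v := rfl

lemma inner_e_e (p q : Fin 3 × Fin 3) : inner ℂ (e p) (e q) = if p = q then 1 else 0 :=
  orthonormal_iff_ite.mp EuclideanSpace.orthonormal_single p q

lemma S1_e (p : Fin 3 × Fin 3) : S1 (e p) = e (s p.1, p.2) := by
  ext q
  simp [S1, e, Prod.ext_iff, s, Equiv.swap_apply_eq_iff]

lemma S1_ψt₀ :
    S1 ψt₀ = (1 / (Real.sqrt 6 : ℂ)) • (e (1, 0) + e (1, 1) + (2 : ℂ) • e (0, 2)) := by
  simp only [ψt₀, map_smul, map_add, S1_e]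
  rfl

lemma inner_ψ₀_ψt₀ : inner ℂ ψ₀ ψt₀ = (3 / (Real.sqrt 2 * Real.sqrt 6) : ℝ) := by
  simp [ψ₀, ψt₀, inner_e_e, -inner_self_eq_norm_sq_to_K]
  ring

lemma inner_ψ₁_S1_ψt₀ : inner ℂ ψ₁ (S1 ψt₀) = (3 / (Real.sqrt 2 * Real.sqrt 6) : ℝ) := by
  simp [ψ₁, S1_ψt₀, inner_e_e, -inner_self_eq_norm_sq_to_K]
  ring

lemma three_div_sqrt_two_mul_sqrt_six_sq : (3 / (Real.sqrt 2 * Real.sqrt 6)) ^ 2 = (3 / 4 : ℝ) := by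
  rw [div_pow, mul_pow, Real.sq_sqrt zero_le_two, Real.sq_sqrt (by norm_num)]
  norm_num

/-- Alice's cheating strategy succeeds with total probability `3/4`: Bob's bit being
uniform, she prepares `ψ̃₀`, keeping it if `b_B = 0` and applying `S ⊗ 1` if `b_B = 1`,
so that Bob's measurement accepts outcome `0` resp. `1` with probability `3/4` each. -/
theorem alice_cheating_probability :
    (1 / 2 : ℝ) * ‖(inner ℂ ψ₀ ψt₀ : ℂ)‖ ^ 2
      + (1 / 2 : ℝ) * ‖(inner ℂ ψ₁ (S1 ψt₀) : ℂ)‖ ^ 2 = 3 / 4 := by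
  rw [inner_ψ₀_ψt₀, inner_ψ₁_S1_ψt₀, Complex.norm_real, Real.norm_eq_abs, sq_abs,
    three_div_sqrt_two_mul_sqrt_six_sq]
  norm_num
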